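/- Let N ≥ 8 be an integer divisible by 4. The N/4 linear functionals γ ↦ ψ_even^{(i,j,k,l)}(γ) on ℝ^{N/4}, indexed by (i,j,k,l) ∈ S_2, are linearly independent; equivalently, the N/4 × N/4 matrix whose row indexed by (i,j,k,l) ∈ S_2 has entries s_{2si} s_{2sj} s_{2sk} s_{2sl} for s = 1, …, N/4 is invertible. -/

import Mathlib

/-- `s_α = sin(απ/N)` -/
noncomputable def ss (N : ℕ) (a : ℤ) : ℝ := Real.sin (a * Real.pi / N)

/-- `ψ_even^{(i,j,k,l)}(γ) = ∑_{s=1}^{N/4} γ_s s_{2si} s_{2sj} s_{2sk} s_{2sl}`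
as a linear functional on `ℝ^{N/4}`; the vector `γ` is 0-indexed. -/
noncomputable def psiEvenLin (N : ℕ) (i j k l : ℤ) : (Fin (N / 4) → ℝ) →ₗ[ℝ] ℝ :=
  ∑ s : Fin (N / 4),
    (ss N ((2 * ((s : ℕ) + 1) : ℤ) * i) * ss N ((2 * ((s : ℕ) + 1) : ℤ) * j) *
      ss N ((2 * ((s : ℕ) + 1) : ℤ) * k) * ss N ((2 * ((s : ℕ) + 1) : ℤ) * l)) •
        LinearMap.proj s

/-- `S₂ = {(2−m, m, N/2−1, N/2−1) : m = 1 or 3 ≤ m ≤ N/4+1}` -/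
def S2set (N : ℕ) : Set (ℤ × ℤ × ℤ × ℤ) :=
  {x | ∃ m : ℤ, (m = 1 ∨ (3 ≤ m ∧ m ≤ (N : ℤ) / 4 + 1)) ∧
    x = (2 - m, m, (N : ℤ) / 2 - 1, (N : ℤ) / 2 - 1)}

/-- Enumeration of the values of `m` indexing `S₂`: row `t` (0-indexed)
corresponds to `m = 1` for `t = 0` and `m = t + 2` for `t ≥ 1`
(so `m` runs through `1, 3, 4, …, N/4 + 1`). -/
def mOf (N : ℕ) (t : Fin (N / 4)) : ℤ := if (t : ℕ) = 0 then 1 else (t : ℕ) + 2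

/-- The `N/4 × N/4` matrix whose row indexed by `(2−m, m, N/2−1, N/2−1) ∈ S₂`
has entries `s_{2s(2−m)} s_{2sm} s_{2s(N/2−1)} s_{2s(N/2−1)}`, `s = 1, …, N/4`. -/
noncomputable def MevenMat (N : ℕ) : Matrix (Fin (N / 4)) (Fin (N / 4)) ℝ :=
  fun t s =>
    ss N ((2 * ((s : ℕ) + 1) : ℤ) * (2 - mOf N t)) *
    ss N ((2 * ((s : ℕ) + 1) : ℤ) * mOf N t) *
    ss N ((2 * ((s : ℕ) + 1) : ℤ) * ((N : ℤ) / 2 - 1)) *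
    ss N ((2 * ((s : ℕ) + 1) : ℤ) * ((N : ℤ) / 2 - 1))

/-!
Put `θ = 2sπ/N` and `x = cos 2θ = cos(4sπ/N)`. Product-to-sum gives
`s_{2s(2-m)} s_{2sm} = (T_{m-1}(x) - x)/2`, and since `4 ∣ N` also
`s_{2s(N/2-1)}² = sin²θ = (1 - x)/2`. As `T_{m-1}(1) = 1`, the entry in row `m` is
`-(1 - x)²/4 · P_m(x)` with `P_m = (T_{m-1} - X)/(X - 1)`, and `P_m` has degree exactly `m - 2`
for `m ≥ 3` while `P_1 = -1`. Hence the matrix is a triangular change of basis of the Vandermonde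
matrix at the distinct nodes `cos(4sπ/N)`, `s = 1, …, N/4`, followed by a diagonal matrix with
nonzero entries, because no node equals `1`.
-/

open Polynomial Real

namespace Matrix

theorem det_eval_matrixOfPolynomials_eq_det_vandermonde_mul {R : Type*} [CommRing R] {n : ℕ}
    (v : Fin n → R) (p : Fin n → R[X]) (h_deg : ∀ i, (p i).natDegree = i) :
    (of fun i j => (p j).eval (v i)).det = (vandermonde v).det * ∏ i, (p i).leadingCoeff := by
  rw [eval_matrixOfPolynomials_eq_vandermonde_mul_matrixOfPolynomials v p fun i ↦ (h_deg i).le,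
    det_mul,
    det_of_isUpperTriangular (matrixOfPolynomials_blockTriangular p fun i ↦ (h_deg i).le)]
  congr 1
  refine Finset.prod_congr rfl fun i _ ↦ ?_
  rw [of_apply, ← h_deg i, coeff_natDegree]

theorem det_eval_matrixOfPolynomials_ne_zero {K : Type*} [Field K] {n : ℕ}
    {v : Fin n → K} (hv : Function.Injective v) {p : Fin n → K[X]}
    (h_deg : ∀ i, (p i).natDegree = i) (hp : ∀ i, p i ≠ 0) :
    (of fun i j => (p j).eval (v i)).det ≠ 0 := by
  rw [det_eval_matrixOfPolynomials_eq_det_vandermonde_mul v p h_deg]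
  exact mul_ne_zero (det_vandermonde_ne_zero_iff.mpr hv)
    (Finset.prod_ne_zero_iff.mpr fun i _ ↦ leadingCoeff_ne_zero.mpr (hp i))

theorem linearIndependent_sum_smul_proj_of_isUnit {R n : Type*} [CommRing R] [Fintype n]
    [DecidableEq n] {M : Matrix n n R} (hM : IsUnit M) :
    LinearIndependent R fun i ↦ ∑ j, M i j • (LinearMap.proj j : (n → R) →ₗ[R] R) := by
  have hrows : (fun i ↦ ∑ j, M i j • (LinearMap.proj j : (n → R) →ₗ[R] R)) =
      dotProductEquiv R n ∘ M.row := by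
    ext i v
    simp [dotProduct]
  rw [hrows]
  exact (linearIndependent_rows_of_isUnit hM).map' _ (dotProductEquiv R n).ker

end Matrix

open Polynomial.Chebyshev

noncomputable def chebQuot (m : ℤ) : ℝ[X] := (T ℝ (m - 1) - X) /ₘ (X - C 1)

theorem X_sub_C_one_mul_chebQuot (m : ℤ) : (X - C 1) * chebQuot m = T ℝ (m - 1) - X :=
  mul_divByMonic_eq_iff_isRoot.mpr (by simp)

theorem natDegree_T_sub_X_mOf {N : ℕ} (t : Fin (N / 4)) :
    (T ℝ (mOf N t - 1) - X).natDegree = (t : ℕ) + 1 := by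
  unfold mOf
  split_ifs with ht
  · rw [ht, sub_self, T_zero, natDegree_sub_eq_right_of_natDegree_lt] <;> simp
  · rw [natDegree_sub_eq_left_of_natDegree_lt] <;> simp <;> omega

theorem natDegree_chebQuot_mOf {N : ℕ} (t : Fin (N / 4)) :
    (chebQuot (mOf N t)).natDegree = (t : ℕ) := by
  rw [chebQuot, natDegree_divByMonic _ (monic_X_sub_C 1), natDegree_T_sub_X_mOf,
    natDegree_X_sub_C, Nat.add_sub_cancel]

theorem chebQuot_mOf_ne_zero {N : ℕ} (t : Fin (N / 4)) : chebQuot (mOf N t) ≠ 0 := by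
  intro h
  have := natDegree_T_sub_X_mOf t
  rw [← X_sub_C_one_mul_chebQuot, h, mul_zero, natDegree_zero] at this
  omega

theorem sin_two_sub_mul_sin_mul (m : ℤ) (θ : ℝ) :
    sin (((2 - m : ℤ) : ℝ) * θ) * sin (m * θ) =
      (cos (2 * θ) - 1) * (chebQuot m).eval (cos (2 * θ)) / 2 := by
  have hT := congrArg (eval (cos (2 * θ))) (X_sub_C_one_mul_chebQuot m)
  simp only [eval_mul, eval_sub, eval_X, eval_C, T_real_cos] at hT
  push_cast
  rw [hT, show ((m - 1 : ℤ) : ℝ) * (2 * θ) = -((2 - m) * θ - m * θ) by push_cast; ring,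
    cos_neg, show 2 * θ = (2 - m) * θ + m * θ by ring, cos_sub, cos_add]
  ring

noncomputable def evenNode (N : ℕ) (s : Fin (N / 4)) : ℝ := cos (4 * ((s : ℝ) + 1) * π / N)

theorem MevenMat_apply {N : ℕ} (hN : 4 ∣ N) (t s : Fin (N / 4)) :
    MevenMat N t s =
      -((1 - evenNode N s) ^ 2 / 4) * (chebQuot (mOf N t)).eval (evenNode N s) := by
  obtain ⟨c, rfl⟩ := hN
  have hc : (c : ℝ) ≠ 0 := Nat.cast_ne_zero.mpr (by have := s.isLt; omega)
  set θ : ℝ := ((s : ℝ) + 1) * π / (2 * c) with hθ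
  have hss (i : ℤ) : ss (4 * c) (2 * ((s : ℕ) + 1) * i) = sin (i * θ) := by
    rw [ss, hθ]
    congr 1
    push_cast
    field_simp
    ring
  have hnode : evenNode (4 * c) s = cos (2 * θ) := by
    rw [evenNode, hθ]
    congr 1
    push_cast
    field_simp
  have hhalf : sin (((((4 * c : ℕ) : ℤ) / 2 - 1 : ℤ) : ℝ) * θ) ^ 2 = sin θ ^ 2 := by
    rw [show ((4 * c : ℕ) : ℤ) / 2 - 1 = 2 * c - 1 by omega,
      show ((2 * c - 1 : ℤ) : ℝ) * θ = ((s + 1 : ℕ) : ℝ) * π - θ by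
        rw [hθ]; push_cast; field_simp,
      sin_nat_mul_pi_sub]
    simp [mul_pow, ← pow_mul]
  rw [MevenMat, hss, hss, hss, mul_assoc, ← sq, hhalf, sin_two_sub_mul_sin_mul,
    sin_sq_eq_half_sub, hnode]
  ring

theorem evenNode_angle_mem {N : ℕ} (s : Fin (N / 4)) :
    4 * ((s : ℝ) + 1) * π / N ∈ Set.Ioc 0 π := by
  have hs : 4 * ((s : ℝ) + 1) ≤ N := by
    exact_mod_cast (show 4 * ((s : ℕ) + 1) ≤ N by omega)
  have hN : (0 : ℝ) < N := by linarith
  constructor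
  · positivity
  · rw [div_le_iff₀ hN]
    nlinarith [pi_pos]

theorem evenNode_injective (N : ℕ) : Function.Injective (evenNode N) := by
  intro a b hab
  have h := injOn_cos (Set.Ioc_subset_Icc_self (evenNode_angle_mem a))
    (Set.Ioc_subset_Icc_self (evenNode_angle_mem b)) hab
  have hN : (N : ℝ) ≠ 0 := Nat.cast_ne_zero.mpr (by have := a.isLt; omega)
  field_simp at h
  ext
  exact_mod_cast (show (a : ℝ) = b by nlinarith [pi_pos])

theorem evenNode_ne_one {N : ℕ} (s : Fin (N / 4)) : evenNode N s ≠ 1 := by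
  intro h
  have := injOn_cos (Set.Ioc_subset_Icc_self (evenNode_angle_mem s))
    (Set.left_mem_Icc.mpr pi_pos.le) (h.trans cos_zero.symm)
  exact (evenNode_angle_mem s).1.ne' this

open Matrix in
theorem isUnit_MevenMat {N : ℕ} (hN : 4 ∣ N) : IsUnit (MevenMat N) := by
  have hM : (MevenMat N)ᵀ = diagonal (fun s ↦ -((1 - evenNode N s) ^ 2 / 4)) *
      of fun s t ↦ (chebQuot (mOf N t)).eval (evenNode N s) := by
    ext s t
    simp [diagonal_mul, MevenMat_apply hN]
  rw [← isUnit_transpose, isUnit_iff_isUnit_det, hM, det_mul, det_diagonal, isUnit_iff_ne_zero]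
  refine mul_ne_zero (Finset.prod_ne_zero_iff.mpr fun s _ ↦ ?_)
    (det_eval_matrixOfPolynomials_ne_zero (evenNode_injective N) natDegree_chebQuot_mOf
      chebQuot_mOf_ne_zero)
  exact neg_ne_zero.mpr
    (div_ne_zero (pow_ne_zero 2 (sub_ne_zero.mpr (evenNode_ne_one s).symm)) four_ne_zero)

def S2tuple (N : ℕ) (t : Fin (N / 4)) : ℤ × ℤ × ℤ × ℤ :=
  (2 - mOf N t, mOf N t, (N : ℤ) / 2 - 1, (N : ℤ) / 2 - 1)

theorem mOf_injective (N : ℕ) : Function.Injective (mOf N) := by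
  intro a b h
  unfold mOf at h
  ext
  split_ifs at h <;> omega

theorem S2tuple_injective (N : ℕ) : Function.Injective (S2tuple N) :=
  fun _ _ h ↦ mOf_injective N (congrArg (·.2.1) h)

theorem S2set_eq_range {N : ℕ} (hN : 4 ≤ N) : S2set N = Set.range (S2tuple N) := by
  ext x
  constructor
  · rintro ⟨m, hm, rfl⟩
    have hm' : ∃ t : Fin (N / 4), mOf N t = m := by
      rcases hm with rfl | ⟨h3, hle⟩
      · exact ⟨⟨0, by omega⟩, rfl⟩
      · refine ⟨⟨(m - 2).toNat, by omega⟩, ?_⟩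
        simp only [mOf]
        split_ifs <;> omega
    obtain ⟨t, rfl⟩ := hm'
    exact ⟨t, rfl⟩
  · rintro ⟨t, rfl⟩
    refine ⟨mOf N t, ?_, rfl⟩
    have := t.isLt
    unfold mOf
    split_ifs <;> omega

theorem psiEven_S2_linearIndependent (N : ℕ) (hN4 : 4 ∣ N) (hN8 : 8 ≤ N) :
    LinearIndependent ℝ (fun x : ↥(S2set N) =>
      psiEvenLin N x.1.1 x.1.2.1 x.1.2.2.1 x.1.2.2.2) ∧
    IsUnit (MevenMat N) := by
  refine ⟨?_, isUnit_MevenMat hN4⟩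
  rw [S2set_eq_range (by omega)]
  -- unfolding, `psiEvenLin N` at `S2tuple N t` is the functional `∑ s, MevenMat N t s • proj s`
  exact (linearIndependent_equiv (Equiv.ofInjective _ (S2tuple_injective N))).mp
    (Matrix.linearIndependent_sum_smul_proj_of_isUnit (isUnit_MevenMat hN4))
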